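/- Let G be a finite graph, let κ, b₀ be positive integers with 2·b₀·κ + b₀² < C(κ,2), and let W ⊆ V(G) be such that every vertex v ∉ W has degree less than b₀ in G and has at most b₀² vertices at distance exactly 2 from it in G. Suppose f assigns to each vertex of W a 2-element subset of {1,…,κ} such that any two adjacent vertices of W receive disjoint labels and any two vertices of W at distance 2 in G receive distinct labels. Then f extends to a proper 2-tone κ-coloring of all of G, i.e., a labeling of V(G) by 2-element subsets of {1,…,κ} in which adjacent vertices receive disjoint labels and vertices at distance 2 receive distinct labels. -/

import Mathlib

open Filter

noncomputable instance {n : ℕ} : Fintype (SimpleGraph (Fin n)) :=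
  Fintype.ofFinite _

/-- The number of edges of a graph on `Fin n`. -/
noncomputable def edgeCount {n : ℕ} (G : SimpleGraph (Fin n)) : ℕ := G.edgeSet.ncard

open scoped Classical in
/-- The probability of the event `A` under the Erdős–Rényi random graph `G_{n,p}`:
each of the `C(n,2)` potential edges appears independently with probability `p`. -/
noncomputable def erProb (n : ℕ) (p : ℝ) (A : Set (SimpleGraph (Fin n))) : ℝ :=
  ∑ G : SimpleGraph (Fin n),
    if G ∈ A then p ^ edgeCount G * (1 - p) ^ (n.choose 2 - edgeCount G) else 0

/-- `f` is a proper `t`-tone `k`-coloring of `G`: every vertex gets a `t`-element subset of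
`{0, …, k-1}`, and `|f u ∩ f v| < d(u,v)` for distinct vertices in a common component. -/
def IsTToneColoring {V : Type*} (G : SimpleGraph V) (t k : ℕ) (f : V → Finset ℕ) : Prop :=
  (∀ v, f v ⊆ Finset.range k ∧ (f v).card = t) ∧
    ∀ u v, u ≠ v → G.Reachable u v → ((f u) ∩ (f v)).card < G.dist u v

/-- The `t`-tone chromatic number `τ_t(G)`. -/
noncomputable def toneChromatic {V : Type*} (G : SimpleGraph V) (t : ℕ) : ℕ :=
  sInf {k | ∃ f, IsTToneColoring G t k f}

/-- The ordinary chromatic number, as a natural number. -/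
noncomputable def chromNum {V : Type*} (G : SimpleGraph V) : ℕ := G.chromaticNumber.toNat

/-- The maximum degree `Δ(G)`. -/
noncomputable def maxDeg {n : ℕ} (G : SimpleGraph (Fin n)) : ℕ :=
  Finset.univ.sup fun v => (G.neighborSet v).ncard

/-- The independence number `α(G)`. -/
noncomputable def indepNum {V : Type*} (G : SimpleGraph V) : ℕ :=
  sSup {k | ∃ S : Set V, S.ncard = k ∧ ∀ u ∈ S, ∀ v ∈ S, ¬ G.Adj u v}

/-- The set of vertices at graph distance at most `r` from the vertex set `Z`;
this equals `Z ∪ N¹(Z) ∪ ⋯ ∪ N^r(Z)` where `N^i(Z)` is the set of vertices at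
distance exactly `i` from `Z`. -/
def distBall {V : Type*} (G : SimpleGraph V) (Z : Set V) (r : ℕ) : Set V :=
  {v | ∃ u ∈ Z, G.Reachable u v ∧ G.dist u v ≤ r}

/-- The `i`-th power graph `G^i`: `u ~ v` iff `1 ≤ d_G(u,v) ≤ i`. -/
def powerGraph {V : Type*} (G : SimpleGraph V) (i : ℕ) : SimpleGraph V where
  Adj u v := u ≠ v ∧ G.Reachable u v ∧ G.dist u v ≤ i
  symm := ⟨by
    rintro u v ⟨h1, h2, h3⟩
    exact ⟨h1.symm, h2.symm, by rwa [SimpleGraph.dist_comm]⟩⟩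
  loopless := ⟨by rintro v ⟨h, _⟩; exact h rfl⟩

/-- The set `V₀` of vertices of degree at least `(ln n)^{1/4}`. -/
def highDegSet (n : ℕ) (G : SimpleGraph (Fin n)) : Set (Fin n) :=
  {v | Real.log n ^ ((1 : ℝ)/4) ≤ ((G.neighborSet v).ncard : ℝ)}

/-!
Colour the vertices outside `W` greedily, one at a time. When an uncoloured vertex `v` is
reached, a 2-subset of `{0, …, κ-1}` is forbidden for it only if it meets the label of one of
its fewer than `b₀` neighbours (each label, being a pair, meets at most `2κ` pairs) or equals
the label of one of its at most `b₀²` vertices at distance 2. That rules out at most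
`2b₀κ + b₀²` of the `C(κ,2)` pairs, so an admissible pair always remains.
-/

open Finset

theorem Finset.card_filter_powersetCard_two_not_disjoint_le {α : Type*} [DecidableEq α]
    (t s : Finset α) :
    #{p ∈ t.powersetCard 2 | ¬Disjoint p s} ≤ #s * #t := by
  calc #{p ∈ t.powersetCard 2 | ¬Disjoint p s}
      ≤ #(s.biUnion fun a => t.image fun b => ({a, b} : Finset α)) := by
        refine card_le_card fun p hp => ?_
        obtain ⟨⟨hpt, hp2⟩, hps⟩ := by simpa only [mem_filter, mem_powersetCard] using hp
        obtain ⟨a, hap, has⟩ := not_disjoint_iff.mp hps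
        obtain ⟨x, y, -, rfl⟩ := card_eq_two.mp hp2
        simp only [mem_biUnion, mem_image]
        rcases mem_insert.mp hap with rfl | hay
        · exact ⟨a, has, y, hpt (by simp), rfl⟩
        · obtain rfl := mem_singleton.mp hay
          exact ⟨a, has, x, hpt (by simp), pair_comm _ _⟩
    _ ≤ ∑ a ∈ s, #(t.image fun b => ({a, b} : Finset α)) := card_biUnion_le
    _ ≤ ∑ _a ∈ s, #t := sum_le_sum fun _ _ => card_image_le
    _ = #s * #t := by rw [sum_const, smul_eq_mul]

namespace SimpleGraph

variable {V : Type*} (G : SimpleGraph V) (κ : ℕ)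

structure IsPartialTwoToneColoring (W : Set V) (f : V → Finset ℕ) : Prop where
  subset_range : ∀ v ∈ W, f v ⊆ range κ
  card_eq_two : ∀ v ∈ W, #(f v) = 2
  disjoint_of_adj : ∀ u ∈ W, ∀ v ∈ W, G.Adj u v → Disjoint (f u) (f v)
  ne_of_dist_eq_two : ∀ u ∈ W, ∀ v ∈ W, G.dist u v = 2 → f u ≠ f v

variable {G κ}

theorem IsPartialTwoToneColoring.update_insert [DecidableEq V] {W : Set V} {f : V → Finset ℕ}
    (hf : G.IsPartialTwoToneColoring κ W f) {v : V} (hv : v ∉ W) {c : Finset ℕ}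
    (hc : c ⊆ range κ) (hc2 : #c = 2) (hadj : ∀ u ∈ W, G.Adj v u → Disjoint c (f u))
    (hdist : ∀ u ∈ W, G.dist v u = 2 → c ≠ f u) :
    G.IsPartialTwoToneColoring κ (insert v W) (Function.update f v c) := by
  have hW : ∀ u ∈ W, Function.update f v c u = f u := fun u hu =>
    Function.update_of_ne (by rintro rfl; exact hv hu) _ _
  constructor
  · rintro u (rfl | hu)
    · simpa using hc
    · simpa [hW u hu] using hf.subset_range u hu
  · rintro u (rfl | hu)
    · simpa using hc2
    · simpa [hW u hu] using hf.card_eq_two u hu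
  · rintro u (rfl | hu) w (rfl | hw) h
    · exact absurd h (G.loopless.irrefl _)
    · simpa [hW w hw] using hadj w hw h
    · simpa [hW u hu] using (hadj u hu h.symm).symm
    · simpa [hW u hu, hW w hw] using hf.disjoint_of_adj u hu w hw h
  · rintro u (rfl | hu) w (rfl | hw) h
    · simp at h
    · simpa [hW w hw] using hdist w hw h
    · simpa [hW u hu] using (hdist u hu (by rwa [dist_comm])).symm
    · simpa [hW u hu, hW w hw] using hf.ne_of_dist_eq_two u hu w hw h

theorem IsPartialTwoToneColoring.exists_admissible_pair [Finite V] {W : Set V}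
    {f : V → Finset ℕ} (hf : G.IsPartialTwoToneColoring κ W f) {b₀ : ℕ}
    (hcount : 2 * b₀ * κ + b₀ ^ 2 < κ.choose 2) {v : V}
    (hdeg : (G.neighborSet v).ncard ≤ b₀) (hdist2 : {u | G.dist v u = 2}.ncard ≤ b₀ ^ 2) :
    ∃ c ⊆ range κ, #c = 2 ∧ (∀ u ∈ W, G.Adj v u → Disjoint c (f u)) ∧
      (∀ u ∈ W, G.dist v u = 2 → c ≠ f u) := by
  classical
  have := Fintype.ofFinite V
  set N : Finset V := {u | u ∈ W ∧ G.Adj v u}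
  set D : Finset V := {u | u ∈ W ∧ G.dist v u = 2}
  set forbidden : Finset (Finset ℕ) :=
    (N.biUnion fun u => {p ∈ (range κ).powersetCard 2 | ¬Disjoint p (f u)}) ∪ D.image f
  have hN : #N ≤ b₀ := by
    rw [← Set.ncard_coe_finset]
    exact (Set.ncard_le_ncard (fun u hu => (by simpa [N] using hu : u ∈ W ∧ _).2)).trans hdeg
  have hD : #D ≤ b₀ ^ 2 := by
    rw [← Set.ncard_coe_finset]
    exact (Set.ncard_le_ncard (fun u hu => (by simpa [D] using hu : u ∈ W ∧ _).2)).trans hdist2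
  have hforbidden : #forbidden < #((range κ).powersetCard 2) := by
    have hmeet : ∀ u ∈ N, #{p ∈ (range κ).powersetCard 2 | ¬Disjoint p (f u)} ≤ 2 * κ :=
      fun u hu => by
        have hu : u ∈ W ∧ G.Adj v u := by simpa [N] using hu
        simpa [hf.card_eq_two u hu.1] using
          card_filter_powersetCard_two_not_disjoint_le (range κ) (f u)
    calc #forbidden ≤ #N * (2 * κ) + #D :=
          (card_union_le _ _).trans (add_le_add (card_biUnion_le_card_mul _ _ _ hmeet)
            card_image_le)
      _ ≤ b₀ * (2 * κ) + b₀ ^ 2 := by gcongr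
      _ < #((range κ).powersetCard 2) := by rw [card_powersetCard, card_range]; linarith
  obtain ⟨c, hc, hcf⟩ := exists_mem_notMem_of_card_lt_card hforbidden
  rw [mem_powersetCard] at hc
  refine ⟨c, hc.1, hc.2, fun u hu huv => ?_, fun u hu huv hcu => ?_⟩
  · by_contra h
    exact hcf (mem_union_left _ (mem_biUnion.mpr ⟨u, by simp [N, hu, huv], by simp [hc, h]⟩))
  · exact hcf (mem_union_right _ (mem_image.mpr ⟨u, by simp [D, hu, huv], hcu.symm⟩))

theorem IsPartialTwoToneColoring.exists_extension [Finite V] {b₀ : ℕ}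
    (hcount : 2 * b₀ * κ + b₀ ^ 2 < κ.choose 2) (S : Finset V) {W : Set V} {f : V → Finset ℕ}
    (hf : G.IsPartialTwoToneColoring κ W f) (hS : Wᶜ ⊆ S)
    (hdeg : ∀ v ∉ W, (G.neighborSet v).ncard ≤ b₀)
    (hdist2 : ∀ v ∉ W, {u | G.dist v u = 2}.ncard ≤ b₀ ^ 2) :
    ∃ g : V → Finset ℕ, (∀ v ∈ W, g v = f v) ∧ G.IsPartialTwoToneColoring κ Set.univ g := by
  classical
  induction S using Finset.induction_on generalizing W f with
  | empty =>
    obtain rfl : W = Set.univ := by simpa using hS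
    exact ⟨f, fun _ _ => rfl, hf⟩
  | insert v S _ ih =>
    by_cases hv : v ∈ W
    · refine ih hf (fun u hu => ?_) hdeg hdist2
      exact (Finset.mem_insert.mp (hS hu)).resolve_left (by rintro rfl; exact hu hv)
    obtain ⟨c, hc, hc2, hadj, hdist⟩ := hf.exists_admissible_pair hcount (hdeg v hv) (hdist2 v hv)
    have hS' : (insert v W)ᶜ ⊆ S := fun u hu =>
      (Finset.mem_insert.mp (hS (hu <| Set.mem_insert_of_mem v ·))).resolve_left
        (hu <| · ▸ Set.mem_insert v W)
    obtain ⟨g, hgf, hg⟩ := ih (hf.update_insert hv hc hc2 hadj hdist) hS'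
      (fun u hu => hdeg u (hu <| Set.mem_insert_of_mem v ·))
      (fun u hu => hdist2 u (hu <| Set.mem_insert_of_mem v ·))
    refine ⟨g, fun u hu => ?_, hg⟩
    rw [hgf u (Set.mem_insert_of_mem v hu), Function.update_of_ne (by rintro rfl; exact hv hu)]

end SimpleGraph

theorem greedy_two_tone_extension_general {V : Type*} [Fintype V] (G : SimpleGraph V)
    (κ b₀ : ℕ)
    (hcount : 2 * b₀ * κ + b₀ ^ 2 < κ.choose 2)
    (W : Set V)
    (hdeg : ∀ v : V, v ∉ W → (G.neighborSet v).ncard < b₀)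
    (hdist2 : ∀ v : V, v ∉ W → {u : V | G.dist v u = 2}.ncard ≤ b₀ ^ 2)
    (f : V → Finset ℕ)
    (hf1 : ∀ v ∈ W, f v ⊆ Finset.range κ ∧ (f v).card = 2)
    (hf2 : ∀ u ∈ W, ∀ v ∈ W, G.Adj u v → Disjoint (f u) (f v))
    (hf3 : ∀ u ∈ W, ∀ v ∈ W, G.dist u v = 2 → f u ≠ f v) :
    ∃ g : V → Finset ℕ, (∀ v ∈ W, g v = f v) ∧
      (∀ v, g v ⊆ Finset.range κ ∧ (g v).card = 2) ∧
      (∀ u v : V, G.Adj u v → Disjoint (g u) (g v)) ∧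
      (∀ u v : V, G.dist u v = 2 → g u ≠ g v) := by
  obtain ⟨g, hgf, hg⟩ := SimpleGraph.IsPartialTwoToneColoring.exists_extension hcount
    Finset.univ ⟨fun v hv => (hf1 v hv).1, fun v hv => (hf1 v hv).2, hf2, hf3⟩
    (by simp) (fun v hv => (hdeg v hv).le) hdist2
  exact ⟨g, hgf, fun v => ⟨hg.subset_range v trivial, hg.card_eq_two v trivial⟩,
    fun u v => hg.disjoint_of_adj u trivial v trivial,
    fun u v => hg.ne_of_dist_eq_two u trivial v trivial⟩

/-- If `2 b₀ κ + b₀² < C(κ,2)`, every vertex outside `W` has degree `< b₀`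
and at most `b₀²` vertices at distance exactly 2, and `f` is a partial 2-tone `κ`-coloring
defined on `W` (adjacent vertices of `W` get disjoint labels, vertices of `W` at distance 2
in `G` get distinct labels), then `f` extends to a proper 2-tone `κ`-coloring of all of `G`. -/
theorem greedy_two_tone_extension {V : Type*} [Fintype V] (G : SimpleGraph V)
    (κ b₀ : ℕ) (hκ : 0 < κ) (hb : 0 < b₀)
    (hcount : 2 * b₀ * κ + b₀ ^ 2 < κ.choose 2)
    (W : Set V)
    (hdeg : ∀ v : V, v ∉ W → (G.neighborSet v).ncard < b₀)
    (hdist2 : ∀ v : V, v ∉ W → {u : V | G.dist v u = 2}.ncard ≤ b₀ ^ 2)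
    (f : V → Finset ℕ)
    (hf1 : ∀ v ∈ W, f v ⊆ Finset.range κ ∧ (f v).card = 2)
    (hf2 : ∀ u ∈ W, ∀ v ∈ W, G.Adj u v → Disjoint (f u) (f v))
    (hf3 : ∀ u ∈ W, ∀ v ∈ W, G.dist u v = 2 → f u ≠ f v) :
    ∃ g : V → Finset ℕ, (∀ v ∈ W, g v = f v) ∧
      (∀ v, g v ⊆ Finset.range κ ∧ (g v).card = 2) ∧
      (∀ u v : V, G.Adj u v → Disjoint (g u) (g v)) ∧
      (∀ u v : V, G.dist u v = 2 → g u ≠ g v) :=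
  greedy_two_tone_extension_general G κ b₀ hcount W hdeg hdist2 f hf1 hf2 hf3
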